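/- Let Λ, Γ be quantum channels on ℂ^d and let Φ_i, Φ_o be unital quantum channels on ℂ^d. Then d_av^ch(Φ_o ∘ Λ ∘ Φ_i, Φ_o ∘ Γ ∘ Φ_i) ≤ d_av^ch(Λ, Γ). -/

import Mathlib

open Matrix Kronecker ComplexOrder

/-- The Hilbert–Schmidt (Frobenius) norm of a complex matrix. -/
noncomputable def hsNorm {n : Type*} [Fintype n] (A : Matrix n n ℂ) : ℝ :=
  Real.sqrt ((Matrix.trace (Aᴴ * A)).re)

/-- The (normalized) Choi matrix `J_Λ = (1/d) ∑ᵢⱼ E_ij ⊗ Λ(E_ij)` of a linear map on matrices. -/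
noncomputable def choi {n : Type*} [Fintype n] [DecidableEq n]
    (Λ : Matrix n n ℂ →ₗ[ℂ] Matrix n n ℂ) : Matrix (n × n) (n × n) ℂ :=
  ((Fintype.card n : ℂ))⁻¹ •
    ∑ i, ∑ j, (Matrix.single i j (1 : ℂ)) ⊗ₖ Λ (Matrix.single i j (1 : ℂ))

/-- A quantum channel: a completely positive (positive semidefinite Choi matrix)
trace-preserving linear map. -/
def IsChannel {n : Type*} [Fintype n] [DecidableEq n]
    (Λ : Matrix n n ℂ →ₗ[ℂ] Matrix n n ℂ) : Prop :=
  (choi Λ).PosSemidef ∧ ∀ X, (Λ X).trace = X.trace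

/-- The average-case distance between quantum channels,
`(1/2) √(‖J_Λ − J_Γ‖_HS² + ‖(Λ−Γ)(I/d)‖_HS²)`. -/
noncomputable def davCh {n : Type*} [Fintype n] [DecidableEq n]
    (Λ Γ : Matrix n n ℂ →ₗ[ℂ] Matrix n n ℂ) : ℝ :=
  (1 / 2) * Real.sqrt ((hsNorm (choi Λ - choi Γ)) ^ 2 +
    (hsNorm (Λ (((Fintype.card n : ℂ))⁻¹ • 1) - Γ (((Fintype.card n : ℂ))⁻¹ • 1))) ^ 2)


/-! Write `Φ X = ∑ₖ Aₖ X Aₖᴴ` in Kraus form. For a unital channel both `∑ Aₖᴴ Aₖ` and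
`∑ Aₖ Aₖᴴ` are the identity, and such a map contracts the Hilbert–Schmidt norm. The Choi matrix
of `Φo ∘ Δ ∘ Φi` is obtained from that of `Δ = Λ - Γ` by two maps of the same kind, with Kraus
operators `1 ⊗ Cₗ` and `Aₖᵀ ⊗ 1`, and `(Φo ∘ Δ ∘ Φi)(I/d) = Φo (Δ (I/d))` by unitality of `Φi`;
so both terms of the distance can only shrink. -/

namespace Matrix

variable {α ι l m n p : Type*} [NonUnitalNonAssocSemiring α]

lemma sum_kronecker (s : Finset ι) (A : ι → Matrix l m α) (B : Matrix n p α) :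
    (∑ k ∈ s, A k) ⊗ₖ B = ∑ k ∈ s, A k ⊗ₖ B := by
  ext ⟨_, _⟩ ⟨_, _⟩
  simp [Matrix.sum_apply, Finset.sum_mul]

lemma kronecker_sum (s : Finset ι) (A : Matrix l m α) (B : ι → Matrix n p α) :
    A ⊗ₖ (∑ k ∈ s, B k) = ∑ k ∈ s, A ⊗ₖ B k := by
  ext ⟨_, _⟩ ⟨_, _⟩
  simp [Matrix.sum_apply, Finset.mul_sum]

variable [Fintype m] [Fintype n]

lemma re_trace_conjTranspose_mul_self_nonneg (M : Matrix m n ℂ) :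
    0 ≤ (Mᴴ * M).trace.re :=
  (Complex.nonneg_iff.mp (posSemidef_conjTranspose_mul_self M).trace_nonneg).1

lemma two_mul_re_trace_conjTranspose_mul_le (P Q : Matrix m n ℂ) :
    2 * (Pᴴ * Q).trace.re ≤ (Pᴴ * P).trace.re + (Qᴴ * Q).trace.re := by
  have h := re_trace_conjTranspose_mul_self_nonneg (P - Q)
  have hQP : (Qᴴ * P).trace.re = (Pᴴ * Q).trace.re := by
    rw [← conjTranspose_conjTranspose P, ← Matrix.conjTranspose_mul, trace_conjTranspose,
      conjTranspose_conjTranspose, Complex.star_def, Complex.conj_re]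
  simp only [conjTranspose_sub, Matrix.sub_mul, Matrix.mul_sub, trace_sub, Complex.sub_re] at h
  linarith

end Matrix

section UnitalKraus

variable {n ι : Type*} [Fintype n] [Fintype ι] [DecidableEq n]

/-- The two conditions say that `X ↦ ∑ₖ Aₖ X Aₖᴴ` is trace preserving and unital. -/
def IsUnitalKraus (A : ι → Matrix n n ℂ) : Prop :=
  ∑ k, (A k)ᴴ * A k = 1 ∧ ∑ k, A k * (A k)ᴴ = 1

namespace IsUnitalKraus

lemma conjTranspose_mul {A : ι → Matrix n n ℂ} (hA : IsUnitalKraus A) :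
    IsUnitalKraus fun kl : ι × ι => (A kl.1)ᴴ * A kl.2 := by
  constructor
  · calc ∑ kl : ι × ι, ((A kl.1)ᴴ * A kl.2)ᴴ * ((A kl.1)ᴴ * A kl.2)
        = ∑ l, (A l)ᴴ * (∑ k, A k * (A k)ᴴ) * A l := by
          simp only [Fintype.sum_prod_type_right, Finset.mul_sum, Finset.sum_mul,
            Matrix.conjTranspose_mul, conjTranspose_conjTranspose, Matrix.mul_assoc]
      _ = 1 := by simp only [hA.2, Matrix.mul_one, hA.1]
  · calc ∑ kl : ι × ι, ((A kl.1)ᴴ * A kl.2) * ((A kl.1)ᴴ * A kl.2)ᴴ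
        = ∑ k, (A k)ᴴ * (∑ l, A l * (A l)ᴴ) * A k := by
          simp only [Fintype.sum_prod_type, Finset.mul_sum, Finset.sum_mul,
            Matrix.conjTranspose_mul, conjTranspose_conjTranspose, Matrix.mul_assoc]
      _ = 1 := by simp only [hA.2, Matrix.mul_one, hA.1]

/- With `D (k, l) = Aₖᴴ Aₗ`, the square of the left side is `∑ Re tr ((D X)ᴴ (X D))`; AM–GM bounds
each term by the mean of `‖D X‖²` and `‖X D‖²`, and both of these sums equal `‖X‖²` because `D` is
again a unital Kraus family. -/
theorem hsNorm_sum_mul_mul_conjTranspose_le {A : ι → Matrix n n ℂ} (hA : IsUnitalKraus A)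
    (X : Matrix n n ℂ) : hsNorm (∑ k, A k * X * (A k)ᴴ) ≤ hsNorm X := by
  set D : ι × ι → Matrix n n ℂ := fun kl => (A kl.1)ᴴ * A kl.2
  have hD : IsUnitalKraus D := hA.conjTranspose_mul
  have hexpand : ((∑ k, A k * X * (A k)ᴴ)ᴴ * ∑ k, A k * X * (A k)ᴴ).trace
      = ∑ kl, ((D kl * X)ᴴ * (X * D kl)).trace := by
    simp only [conjTranspose_sum, Finset.sum_mul, Finset.mul_sum, trace_sum,
      Fintype.sum_prod_type]
    refine Finset.sum_congr rfl fun k _ => Finset.sum_congr rfl fun l _ => ?_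
    have hcycle : (A l * X * (A l)ᴴ)ᴴ * (A k * X * (A k)ᴴ)
        = A l * (Xᴴ * (A l)ᴴ * A k * X * (A k)ᴴ) := by
      simp only [Matrix.conjTranspose_mul, conjTranspose_conjTranspose, Matrix.mul_assoc]
    rw [hcycle, trace_mul_comm]
    simp only [D, Matrix.conjTranspose_mul, conjTranspose_conjTranspose, Matrix.mul_assoc]
  have hleft : ∑ kl, ((D kl * X)ᴴ * (D kl * X)).trace = (Xᴴ * X).trace := by
    calc ∑ kl, ((D kl * X)ᴴ * (D kl * X)).trace = (Xᴴ * (∑ kl, (D kl)ᴴ * D kl) * X).trace := by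
          simp only [Matrix.conjTranspose_mul, Finset.mul_sum, Finset.sum_mul, trace_sum,
            Matrix.mul_assoc]
      _ = (Xᴴ * X).trace := by rw [hD.1, Matrix.mul_one]
  have hright : ∑ kl, ((X * D kl)ᴴ * (X * D kl)).trace = (Xᴴ * X).trace := by
    calc ∑ kl, ((X * D kl)ᴴ * (X * D kl)).trace = (Xᴴ * X * ∑ kl, D kl * (D kl)ᴴ).trace := by
          simp only [Matrix.conjTranspose_mul, Finset.mul_sum, trace_sum]
          refine Finset.sum_congr rfl fun kl _ => ?_
          rw [Matrix.mul_assoc, trace_mul_comm]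
          simp only [Matrix.mul_assoc]
      _ = (Xᴴ * X).trace := by rw [hD.2, Matrix.mul_one]
  unfold hsNorm
  refine Real.sqrt_le_sqrt ?_
  have hsum := Finset.sum_le_sum fun kl (_ : kl ∈ Finset.univ) =>
    two_mul_re_trace_conjTranspose_mul_le (D kl * X) (X * D kl)
  rw [← Finset.mul_sum, Finset.sum_add_distrib, ← Complex.re_sum, ← Complex.re_sum,
    ← Complex.re_sum, hleft, hright, ← hexpand] at hsum
  linarith

lemma transpose {A : ι → Matrix n n ℂ} (hA : IsUnitalKraus A) :
    IsUnitalKraus fun k => (A k)ᵀ := by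
  constructor <;>
  simp only [conjTranspose_transpose_eq_transpose_conjTranspose, ← transpose_mul, ← transpose_sum,
    hA.1, hA.2, transpose_one]

lemma kronecker_one {m : Type*} [Fintype m] [DecidableEq m] {A : ι → Matrix n n ℂ}
    (hA : IsUnitalKraus A) : IsUnitalKraus fun k => A k ⊗ₖ (1 : Matrix m m ℂ) := by
  constructor <;>
  simp only [conjTranspose_kronecker, conjTranspose_one, ← mul_kronecker_mul, Matrix.mul_one,
    ← sum_kronecker, hA.1, hA.2, one_kronecker_one]

lemma one_kronecker {m : Type*} [Fintype m] [DecidableEq m] {A : ι → Matrix n n ℂ}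
    (hA : IsUnitalKraus A) : IsUnitalKraus fun k => (1 : Matrix m m ℂ) ⊗ₖ A k := by
  constructor <;>
  simp only [conjTranspose_kronecker, conjTranspose_one, ← mul_kronecker_mul, Matrix.mul_one,
    ← kronecker_sum, hA.1, hA.2, one_kronecker_one]

end IsUnitalKraus

end UnitalKraus

section Choi

variable {n ι : Type*} [Fintype n] [Fintype ι] [DecidableEq n]

lemma choi_apply (Λ : Matrix n n ℂ →ₗ[ℂ] Matrix n n ℂ) (i a j b : n) :
    choi Λ (i, a) (j, b) = (Fintype.card n : ℂ)⁻¹ * Λ (single i j 1) a b := by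
  simp [choi, Matrix.sum_apply, single_apply, ite_and]

lemma choi_sub (Λ Γ : Matrix n n ℂ →ₗ[ℂ] Matrix n n ℂ) : choi (Λ - Γ) = choi Λ - choi Γ := by
  ext ⟨i, a⟩ ⟨j, b⟩
  simp [choi_apply, mul_sub]

lemma map_eq_sum_single (Λ : Matrix n n ℂ →ₗ[ℂ] Matrix n n ℂ) (X : Matrix n n ℂ) :
    Λ X = ∑ p, ∑ q, X p q • Λ (single p q 1) := by
  conv_lhs => rw [matrix_eq_sum_single X]
  simp only [map_sum, ← map_smul, smul_single, smul_eq_mul, mul_one]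

theorem IsChannel.exists_kraus {Λ : Matrix n n ℂ →ₗ[ℂ] Matrix n n ℂ} (hΛ : IsChannel Λ) :
    ∃ A : n × n → Matrix n n ℂ, (∀ X, Λ X = ∑ k, A k * X * (A k)ᴴ) ∧ ∑ k, (A k)ᴴ * A k = 1 := by
  cases isEmpty_or_nonempty n
  · exact ⟨0, fun _ => Subsingleton.elim _ _, Subsingleton.elim _ _⟩
  -- `Aₖ` is row `k` of `B`, conjugated and reshaped to an `n × n` matrix
  obtain ⟨B, hB⟩ : ∃ B : Matrix (n × n) (n × n) ℂ, (Fintype.card n : ℂ) • choi Λ = Bᴴ * B := by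
    open scoped MatrixOrder Matrix.Norms.L2Operator in
    exact CStarAlgebra.nonneg_iff_eq_star_mul_self.mp (hΛ.1.smul (by positivity)).nonneg
  have hentry (i a j b : n) : Λ (single i j 1) a b = ∑ k, star (B k (i, a)) * B k (j, b) := by
    have h := congr_fun₂ hB (i, a) (j, b)
    rw [Matrix.smul_apply, choi_apply, smul_eq_mul, ← mul_assoc, mul_inv_cancel₀ (by positivity),
      one_mul] at h
    simpa [mul_apply] using h
  refine ⟨fun k => of fun a i => star (B k (i, a)), fun X => ?_, ?_⟩
  · ext a b
    simp only [map_eq_sum_single Λ X, hentry, Matrix.sum_apply, Matrix.smul_apply, smul_eq_mul,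
      mul_apply, of_apply, conjTranspose_apply, star_star, Finset.mul_sum, Finset.sum_mul]
    rw [Finset.sum_comm]
    conv_rhs => rw [Finset.sum_comm]
    refine Finset.sum_congr rfl fun _ _ => ?_
    rw [Finset.sum_comm]
    exact Finset.sum_congr rfl fun _ _ => Finset.sum_congr rfl fun _ _ => by ring
  · ext i j
    calc (∑ k, (of fun a i => star (B k (i, a)))ᴴ * of fun a i => star (B k (i, a))) i j
        = ∑ a, Λ (single j i 1) a a := by
          simp only [Matrix.sum_apply, mul_apply, of_apply, conjTranspose_apply, star_star, hentry]
          rw [Finset.sum_comm]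
          exact Finset.sum_congr rfl fun _ _ => Finset.sum_congr rfl fun _ _ => mul_comm _ _
      _ = (single j i (1 : ℂ)).trace := hΛ.2 _
      _ = (1 : Matrix n n ℂ) i j := by
          rcases eq_or_ne i j with rfl | h
          · simp
          · simp [h, h.symm]

lemma choi_postcomp_kraus (Φ Λ : Matrix n n ℂ →ₗ[ℂ] Matrix n n ℂ) {A : ι → Matrix n n ℂ}
    (hΦ : ∀ X, Φ X = ∑ k, A k * X * (A k)ᴴ) :
    choi (Φ ∘ₗ Λ) = ∑ k, (1 ⊗ₖ A k) * choi Λ * (1 ⊗ₖ A k)ᴴ := by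
  ext ⟨i, a⟩ ⟨j, b⟩
  simp only [choi_apply, LinearMap.coe_comp, Function.comp_apply, hΦ, Matrix.sum_apply, mul_apply,
    conjTranspose_apply, RCLike.star_def, Finset.sum_mul, Finset.mul_sum, kroneckerMap_apply,
    one_apply, ite_mul, one_mul, zero_mul, Fintype.sum_prod_type, Finset.sum_ite_irrel,
    Finset.sum_const_zero, Finset.sum_ite_eq, Finset.mem_univ, ↓reduceIte,
    apply_ite (starRingEnd ℂ), map_zero, mul_ite, mul_zero]
  refine Finset.sum_congr rfl fun _ _ => Finset.sum_congr rfl fun _ _ =>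
    Finset.sum_congr rfl fun _ _ => by ring

lemma choi_precomp_kraus (Λ Φ : Matrix n n ℂ →ₗ[ℂ] Matrix n n ℂ) {A : ι → Matrix n n ℂ}
    (hΦ : ∀ X, Φ X = ∑ k, A k * X * (A k)ᴴ) :
    choi (Λ ∘ₗ Φ) = ∑ k, ((A k)ᵀ ⊗ₖ 1) * choi Λ * ((A k)ᵀ ⊗ₖ 1)ᴴ := by
  ext ⟨i, a⟩ ⟨j, b⟩
  simp only [choi_apply, LinearMap.coe_comp, Function.comp_apply, hΦ, map_sum,
    map_eq_sum_single Λ (_ * single i j 1 * _), mul_apply, single_apply, ite_and, mul_ite, mul_one,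
    mul_zero, Finset.sum_ite_eq, Finset.mem_univ, ↓reduceIte, conjTranspose_apply,
    RCLike.star_def, ite_mul, zero_mul, Matrix.sum_apply, Matrix.smul_apply, smul_eq_mul,
    Finset.mul_sum, kroneckerMap_apply, transpose_apply, one_apply, Fintype.sum_prod_type,
    apply_ite (starRingEnd ℂ), map_zero, Finset.sum_mul]
  refine Finset.sum_congr rfl fun _ _ => ?_
  rw [Finset.sum_comm]
  refine Finset.sum_congr rfl fun _ _ => Finset.sum_congr rfl fun _ _ => by ring

lemma davCh_le_davCh {Λ Γ Λ' Γ' : Matrix n n ℂ →ₗ[ℂ] Matrix n n ℂ}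
    (hchoi : hsNorm (choi Λ' - choi Γ') ≤ hsNorm (choi Λ - choi Γ))
    (hmixed : hsNorm (Λ' ((Fintype.card n : ℂ)⁻¹ • 1) - Γ' ((Fintype.card n : ℂ)⁻¹ • 1))
      ≤ hsNorm (Λ ((Fintype.card n : ℂ)⁻¹ • 1) - Γ ((Fintype.card n : ℂ)⁻¹ • 1))) :
    davCh Λ' Γ' ≤ davCh Λ Γ := by
  unfold davCh
  gcongr <;> exact Real.sqrt_nonneg _

end Choi

theorem statement13_general (d : ℕ)
    (Λ Γ Φi Φo : Matrix (Fin d) (Fin d) ℂ →ₗ[ℂ] Matrix (Fin d) (Fin d) ℂ)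
    (hΦi : IsChannel Φi) (hΦiUnital : Φi 1 = 1)
    (hΦo : IsChannel Φo) (hΦoUnital : Φo 1 = 1) :
    davCh (Φo ∘ₗ Λ ∘ₗ Φi) (Φo ∘ₗ Γ ∘ₗ Φi) ≤ davCh Λ Γ := by
  obtain ⟨A, hΦi_eq, hA_tp⟩ := hΦi.exists_kraus
  obtain ⟨C, hΦo_eq, hC_tp⟩ := hΦo.exists_kraus
  have hA : IsUnitalKraus A := ⟨hA_tp, by simpa [hΦi_eq] using hΦiUnital⟩
  have hC : IsUnitalKraus C := ⟨hC_tp, by simpa [hΦo_eq] using hΦoUnital⟩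
  have hchoi : hsNorm (choi (Φo ∘ₗ Λ ∘ₗ Φi) - choi (Φo ∘ₗ Γ ∘ₗ Φi))
      ≤ hsNorm (choi Λ - choi Γ) := by
    rw [← choi_sub, ← choi_sub, ← LinearMap.comp_sub, ← LinearMap.sub_comp,
      choi_postcomp_kraus _ _ hΦo_eq, choi_precomp_kraus _ _ hΦi_eq]
    exact (hC.one_kronecker (m := Fin d)).hsNorm_sum_mul_mul_conjTranspose_le _ |>.trans
      ((hA.transpose.kronecker_one (m := Fin d)).hsNorm_sum_mul_mul_conjTranspose_le _)
  set ρ : Matrix (Fin d) (Fin d) ℂ := (Fintype.card (Fin d) : ℂ)⁻¹ • 1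
  have hρ : Φi ρ = ρ := by rw [map_smul, hΦiUnital]
  have hmixed : hsNorm ((Φo ∘ₗ Λ ∘ₗ Φi) ρ - (Φo ∘ₗ Γ ∘ₗ Φi) ρ) ≤ hsNorm (Λ ρ - Γ ρ) := by
    simp only [LinearMap.comp_apply, hρ]
    rw [← map_sub, hΦo_eq]
    exact hC.hsNorm_sum_mul_mul_conjTranspose_le _
  exact davCh_le_davCh hchoi hmixed

theorem statement13 (d : ℕ)
    (Λ Γ Φi Φo : Matrix (Fin d) (Fin d) ℂ →ₗ[ℂ] Matrix (Fin d) (Fin d) ℂ)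
    (hΛ : IsChannel Λ) (hΓ : IsChannel Γ)
    (hΦi : IsChannel Φi) (hΦiUnital : Φi 1 = 1)
    (hΦo : IsChannel Φo) (hΦoUnital : Φo 1 = 1) :
    davCh (Φo ∘ₗ Λ ∘ₗ Φi) (Φo ∘ₗ Γ ∘ₗ Φi) ≤ davCh Λ Γ :=
  statement13_general d Λ Γ Φi Φo hΦi hΦiUnital hΦo hΦoUnital
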